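/- arXiv:1406.3130 — 2 statements merged into one kernel-verified Lean document; each statement's English description precedes it below -/
import Mathlib

section
/- Under the stated hypotheses, for all s, u ∈ ℝ one has W_{p+q}(u) − q ∫₀^s W_{p+q}(u − z) W_p(z) dz = W_p(u) + q ∫₀^{u−s} W_p(u − z) W_{p+q}(z) dz. Equivalently, in the paper's notation, 𝓦_{x−a}^{(p,q)}(x − y) = 𝓦_{a−y}^{(p+q,−q)}(x − y) for all x, y, a ∈ ℝ; this is the symmetry relation used at the end of the proof of the main theorem. -/
/-!
Since `1 / (ψ - (p + q)) = 1 / (ψ - p) + q / ((ψ - p) (ψ - (p + q)))` and the Laplace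
transform turns convolution into multiplication, `W_{p+q}` and `W_p + q W_{p+q} ⋆ W_p` have the
same Laplace transform. Laplace transforms of nonnegative functions determine them almost
everywhere: weighted by `exp (-l x)` they become finite measures whose moment generating functions
agree near `0`. Continuity of `W_{p+q} - W_p` and monotonicity of the convolution upgrade this to
the resolvent identity `W_{p+q} = W_p + q W_{p+q} ⋆ W_p` everywhere. The symmetry relation follows
by splitting `∫₀^u` at `u - s` and reflecting `z ↦ u - z` on `[u - s, u]`.
-/

open MeasureTheory Set Filter Topology Real ProbabilityTheory
open scoped Convolution

theorem MeasureTheory.Measure.ext_of_mgf_eqOn_Ioo {μ ν : Measure ℝ} [IsFiniteMeasure μ]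
    [IsFiniteMeasure ν] {δ : ℝ} (hδ : 0 < δ) (hμ : Ioo (-δ) δ ⊆ integrableExpSet id μ)
    (hν : Ioo (-δ) δ ⊆ integrableExpSet id ν)
    (h : EqOn (mgf id μ) (mgf id ν) (Ioo (-δ) δ)) :
    μ = ν := by
  have hstrip : ∀ {ρ : Measure ℝ}, Ioo (-δ) δ ⊆ integrableExpSet id ρ →
      AnalyticOnNhd ℂ (complexMGF id ρ) {z | z.re ∈ Ioo (-δ) δ} := fun hρ =>
    analyticOnNhd_complexMGF.mono fun z hz => interior_maximal hρ isOpen_Ioo hz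
  have hreal : ∃ᶠ z in 𝓝[≠] (0 : ℂ), complexMGF id μ z = complexMGF id ν z := by
    have hofReal : Tendsto ((↑) : ℝ → ℂ) (𝓝[≠] 0) (𝓝[≠] 0) :=
      tendsto_nhdsWithin_iff.2
        ⟨(Complex.continuous_ofReal.tendsto' 0 0 Complex.ofReal_zero).mono_left
          nhdsWithin_le_nhds,
          eventually_nhdsWithin_of_forall fun x hx => Complex.ofReal_ne_zero.2 hx⟩
    refine hofReal.frequently (Eventually.frequently ?_)
    filter_upwards [nhdsWithin_le_nhds (Ioo_mem_nhds (neg_neg_iff_pos.2 hδ) hδ)] with x hx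
    rw [complexMGF_ofReal, complexMGF_ofReal, h hx]
  -- by analytic continuation the complex mgfs agree on the strip, in particular on the imaginary
  -- axis, where they are the characteristic functions
  have hcomplex := (hstrip hμ).eqOn_of_preconnected_of_frequently_eq (hstrip hν)
    ((convex_Ioo (-δ) δ).linear_preimage Complex.reLm).isPreconnected (by simp [hδ]) hreal
  refine Measure.ext_of_charFun (funext fun t => ?_)
  rw [← complexMGF_id_mul_I, ← complexMGF_id_mul_I]
  exact hcomplex (by simp [hδ])

noncomputable def expWeightedMeasure (F : ℝ → ℝ) (l : ℝ) : Measure ℝ :=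
  (volume.restrict (Ioi 0)).withDensity fun x => ENNReal.ofReal (exp (-(l * x)) * F x)

theorem mgf_expWeightedMeasure {F : ℝ → ℝ} (hF : ∀ x, 0 ≤ F x) {l t : ℝ}
    (hint : IntegrableOn (fun x => exp (-((l - t) * x)) * F x) (Ioi 0)) :
    t ∈ integrableExpSet id (expWeightedMeasure F l) ∧
      mgf id (expWeightedMeasure F l) t = ∫ x in Ioi 0, exp (-((l - t) * x)) * F x := by
  have hweight : ∀ x, exp (-(l * x)) * F x * exp (t * id x) = exp (-((l - t) * x)) * F x :=
    fun x => by rw [mul_right_comm, ← exp_add, id]; ring_nf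
  have hdens : AEMeasurable (fun x => ENNReal.ofReal (exp (-(l * x)) * F x))
      (volume.restrict (Ioi 0)) := by
    refine ENNReal.measurable_ofReal.comp_aemeasurable ?_
    have hmeas : Measurable fun x => exp (-(t * x)) := by fun_prop
    refine (hmeas.aemeasurable.mul hint.aestronglyMeasurable.aemeasurable).congr
      (Eventually.of_forall fun x => ?_)
    simp only [Pi.mul_apply, ← mul_assoc, ← exp_add]
    ring_nf
  have hfin : ∀ᵐ x ∂volume.restrict (Ioi 0), ENNReal.ofReal (exp (-(l * x)) * F x) < ⊤ :=
    Eventually.of_forall fun _ => ENNReal.ofReal_lt_top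
  have htoReal : ∀ x, (ENNReal.ofReal (exp (-(l * x)) * F x)).toReal = exp (-(l * x)) * F x :=
    fun x => ENNReal.toReal_ofReal (mul_nonneg (exp_pos _).le (hF x))
  constructor
  · change Integrable _ _
    rw [expWeightedMeasure, integrable_withDensity_iff_integrable_smul₀' hdens hfin]
    simp only [htoReal, smul_eq_mul, hweight]
    exact hint
  · rw [mgf, expWeightedMeasure, integral_withDensity_eq_integral_toReal_smul₀ hdens hfin]
    simp only [htoReal, smul_eq_mul, hweight]

theorem ae_eq_of_integral_exp_mul_eq {f g : ℝ → ℝ} {c : ℝ} (hf : ∀ x, 0 ≤ f x)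
    (hg : ∀ x, 0 ≤ g x)
    (hfi : ∀ l, c < l → IntegrableOn (fun x => exp (-(l * x)) * f x) (Ioi 0))
    (hgi : ∀ l, c < l → IntegrableOn (fun x => exp (-(l * x)) * g x) (Ioi 0))
    (h : ∀ l, c < l →
      ∫ x in Ioi 0, exp (-(l * x)) * f x = ∫ x in Ioi 0, exp (-(l * x)) * g x) :
    f =ᵐ[volume.restrict (Ioi 0)] g := by
  have hl : ∀ t ∈ Ioo (-1 : ℝ) 1, c < c + 1 - t := fun t ht => by linarith [ht.2]
  have hμ := fun t ht => mgf_expWeightedMeasure hf (hfi _ (hl t ht))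
  have hν := fun t ht => mgf_expWeightedMeasure hg (hgi _ (hl t ht))
  have hc : c < c + 1 := lt_add_one c
  have : IsFiniteMeasure (expWeightedMeasure f (c + 1)) :=
    isFiniteMeasure_withDensity_ofReal (hfi _ hc).hasFiniteIntegral
  have : IsFiniteMeasure (expWeightedMeasure g (c + 1)) :=
    isFiniteMeasure_withDensity_ofReal (hgi _ hc).hasFiniteIntegral
  have heq : expWeightedMeasure f (c + 1) = expWeightedMeasure g (c + 1) :=
    Measure.ext_of_mgf_eqOn_Ioo one_pos (fun t ht => (hμ t ht).1) (fun t ht => (hν t ht).1)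
      fun t ht => by rw [(hμ t ht).2, (hν t ht).2, h _ (hl t ht)]
  rw [expWeightedMeasure, expWeightedMeasure, withDensity_eq_iff_of_sigmaFinite
    (hfi _ hc).aestronglyMeasurable.aemeasurable.ennreal_ofReal
    (hgi _ hc).aestronglyMeasurable.aemeasurable.ennreal_ofReal] at heq
  filter_upwards [heq] with x hx
  rw [ENNReal.ofReal_eq_ofReal_iff (mul_nonneg (exp_pos _).le (hf x))
    (mul_nonneg (exp_pos _).le (hg x))] at hx
  exact mul_left_cancel₀ (exp_pos _).ne' hx

theorem eqOn_Ioi_of_ae_eq_of_monotone {f g : ℝ → ℝ} {a : ℝ} (hf : ContinuousOn f (Ioi a))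
    (hg : Monotone g) (h : f =ᵐ[volume.restrict (Ioi a)] g) : EqOn f g (Ioi a) := by
  have hdense : Dense {y | y ∈ Ioi a → f y = g y} :=
    Measure.dense_of_ae ((ae_restrict_iff' measurableSet_Ioi).1 h)
  intro x hx
  have hfx : ContinuousAt f x := hf.continuousAt (Ioi_mem_nhds hx)
  refine le_antisymm (le_of_not_gt fun hlt => ?_) (le_of_not_gt fun hlt => ?_)
  · obtain ⟨c, hcx, hsub⟩ := mem_nhdsLT_iff_exists_Ioo_subset.1
      (nhdsWithin_le_nhds (hfx.eventually (lt_mem_nhds hlt)))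
    obtain ⟨y, hfgy, hy⟩ := hdense.exists_mem_open isOpen_Ioo (nonempty_Ioo.2 (max_lt hcx hx))
    have hfy : g x < f y := hsub ⟨(le_max_left _ _).trans_lt hy.1, hy.2⟩
    linarith [hfgy ((le_max_right _ _).trans_lt hy.1), hg hy.2.le]
  · obtain ⟨b, hxb, hsub⟩ := mem_nhdsGT_iff_exists_Ioo_subset.1
      (nhdsWithin_le_nhds (hfx.eventually (gt_mem_nhds hlt)))
    obtain ⟨y, hfgy, hy⟩ := hdense.exists_mem_open isOpen_Ioo (nonempty_Ioo.2 hxb)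
    have hfy : f y < g x := hsub hy
    linarith [hfgy (hx.trans hy.1), hg hy.1.le]

theorem eqOn_Ici_of_ae_eq_of_monotone {f g : ℝ → ℝ} {a : ℝ} (hf : ContinuousOn f (Ici a))
    (hg : Monotone g) (hga : ContinuousWithinAt g (Ioi a) a)
    (h : f =ᵐ[volume.restrict (Ioi a)] g) : EqOn f g (Ici a) := by
  have hIoi := eqOn_Ioi_of_ae_eq_of_monotone (hf.mono Ioi_subset_Ici_self) hg h
  intro x hx
  rcases (mem_Ici.1 hx).eq_or_lt with rfl | hx
  · exact tendsto_nhds_unique_of_eventuallyEq ((hf a self_mem_Ici).mono Ioi_subset_Ici_self)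
      hga (eventually_nhdsWithin_of_forall hIoi)
  · exact hIoi hx

section Convolution

variable {f g : ℝ → ℝ}

theorem mul_comp_sub_eq_zero_of_notMem_Icc (hf0 : ∀ x < 0, f x = 0)
    (hg0 : ∀ x < 0, g x = 0) {x t : ℝ} (ht : t ∉ Icc 0 x) : f t * g (x - t) = 0 := by
  rcases lt_or_ge t 0 with ht0 | ht0
  · rw [hf0 t ht0, zero_mul]
  · rw [hg0 (x - t) (by linarith [show x < t from not_le.1 fun h => ht ⟨ht0, h⟩]), mul_zero]

theorem mul_comp_sub_eq_zero_of_neg (hf0 : ∀ x < 0, f x = 0)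
    (hg0 : ∀ x < 0, g x = 0) {x : ℝ} (hx : x < 0) (t : ℝ) : f t * g (x - t) = 0 :=
  mul_comp_sub_eq_zero_of_notMem_Icc hf0 hg0 fun ht => (ht.1.trans ht.2).not_gt hx

theorem convolution_eq_zero_of_neg (hf0 : ∀ x < 0, f x = 0)
    (hg0 : ∀ x < 0, g x = 0) {x : ℝ} (hx : x < 0) : (f ⋆ g) x = 0 := by
  simp [convolution_def, mul_comp_sub_eq_zero_of_neg hf0 hg0 hx]

theorem convolution_eq_intervalIntegral (hf0 : ∀ x < 0, f x = 0)
    (hg0 : ∀ x < 0, g x = 0) (x : ℝ) : (f ⋆ g) x = ∫ t in 0..x, f t * g (x - t) := by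
  rcases lt_or_ge x 0 with hx | hx
  · simp [convolution_eq_zero_of_neg hf0 hg0 hx, mul_comp_sub_eq_zero_of_neg hf0 hg0 hx]
  · rw [intervalIntegral.integral_of_le hx, ← integral_Icc_eq_integral_Ioc, convolution_lsmul,
      setIntegral_eq_integral_of_forall_compl_eq_zero fun t =>
        mul_comp_sub_eq_zero_of_notMem_Icc hf0 hg0]
    simp only [smul_eq_mul]

theorem integrableOn_Ioi_zero_iff {h : ℝ → ℝ} (h0 : ∀ x < 0, h x = 0) :
    IntegrableOn h (Ioi 0) ↔ Integrable h := by
  rw [← integrableOn_Ici_iff_integrableOn_Ioi, integrableOn_iff_integrable_of_support_subset]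
  exact fun x hx => not_lt.1 fun hneg => hx (h0 x hneg)

theorem setIntegral_Ioi_zero_eq_integral {h : ℝ → ℝ} (h0 : ∀ x < 0, h x = 0) :
    ∫ x in Ioi 0, h x = ∫ x, h x := by
  rw [← integral_Ici_eq_integral_Ioi]
  exact setIntegral_eq_integral_of_forall_compl_eq_zero fun x hx => h0 x (not_le.1 hx)

theorem integral_exp_mul_convolution (hf0 : ∀ x < 0, f x = 0)
    (hg0 : ∀ x < 0, g x = 0) {l : ℝ}
    (hf : IntegrableOn (fun x => exp (-(l * x)) * f x) (Ioi 0))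
    (hg : IntegrableOn (fun x => exp (-(l * x)) * g x) (Ioi 0)) :
    IntegrableOn (fun x => exp (-(l * x)) * (f ⋆ g) x) (Ioi 0) ∧
      ∫ x in Ioi 0, exp (-(l * x)) * (f ⋆ g) x =
        (∫ x in Ioi 0, exp (-(l * x)) * f x) * ∫ x in Ioi 0, exp (-(l * x)) * g x := by
  set F := fun x => exp (-(l * x)) * f x
  set G := fun x => exp (-(l * x)) * g x
  have hF0 : ∀ x < 0, F x = 0 := fun x hx => by simp [F, hf0 x hx]
  have hG0 : ∀ x < 0, G x = 0 := fun x hx => by simp [G, hg0 x hx]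
  have hweight : (fun x => exp (-(l * x)) * (f ⋆ g) x) = F ⋆ G := by
    ext x
    simp only [convolution_def, ContinuousLinearMap.lsmul_apply, smul_eq_mul, F, G,
      ← integral_const_mul]
    congr 1 with t
    rw [show -(l * x) = -(l * t) + -(l * (x - t)) by ring, exp_add]
    ring
  rw [integrableOn_Ioi_zero_iff hF0] at hf
  rw [integrableOn_Ioi_zero_iff hG0] at hg
  rw [hweight, integrableOn_Ioi_zero_iff (fun x => convolution_eq_zero_of_neg hF0 hG0),
    setIntegral_Ioi_zero_eq_integral (fun x => convolution_eq_zero_of_neg hF0 hG0),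
    setIntegral_Ioi_zero_eq_integral hF0, setIntegral_Ioi_zero_eq_integral hG0,
    integral_convolution _ hf hg]
  exact ⟨hf.integrable_convolution _ hg, rfl⟩

theorem Monotone.nonneg_of_eq_zero_of_neg (hf : Monotone f)
    (hf0 : ∀ x < 0, f x = 0) (x : ℝ) : 0 ≤ f x :=
  (hf0 _ (min_lt_of_right_lt neg_one_lt_zero)).symm.le.trans (hf (min_le_left x (-1)))

theorem monotone_of_monotoneOn_Ici (hf : MonotoneOn f (Ici 0))
    (hf_nonneg : ∀ x, 0 ≤ x → 0 ≤ f x) (hf0 : ∀ x < 0, f x = 0) : Monotone f := by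
  intro x y hxy
  rcases lt_or_ge x 0 with hx | hx
  · rw [hf0 x hx]
    rcases lt_or_ge y 0 with hy | hy
    · rw [hf0 y hy]
    · exact hf_nonneg y hy
  · exact hf hx (hx.trans hxy) hxy

theorem abs_mul_comp_sub_le_indicator (hf : Monotone f) (hf0 : ∀ x < 0, f x = 0)
    (hg : Monotone g) (hg0 : ∀ x < 0, g x = 0) (x t : ℝ) :
    |f t * g (x - t)| ≤ (Icc 0 x).indicator (fun _ => f x * g x) t := by
  by_cases ht : t ∈ Icc 0 x
  · rw [indicator_of_mem ht, abs_of_nonneg (mul_nonneg (hf.nonneg_of_eq_zero_of_neg hf0 t)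
      (hg.nonneg_of_eq_zero_of_neg hg0 _))]
    exact mul_le_mul (hf ht.2) (hg (by linarith [ht.1])) (hg.nonneg_of_eq_zero_of_neg hg0 _)
      (hf.nonneg_of_eq_zero_of_neg hf0 x)
  · rw [indicator_of_notMem ht, mul_comp_sub_eq_zero_of_notMem_Icc hf0 hg0 ht, abs_zero]

theorem integrable_mul_comp_sub (hf : Monotone f) (hf0 : ∀ x < 0, f x = 0)
    (hg : Monotone g) (hg0 : ∀ x < 0, g x = 0) (x : ℝ) :
    Integrable fun t => f t * g (x - t) :=
  ((integrableOn_const measure_Icc_lt_top.ne).integrable_indicator measurableSet_Icc).mono'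
    (hf.measurable.mul
      (hg.measurable.comp (measurable_const.sub measurable_id))).aestronglyMeasurable
    (Eventually.of_forall (abs_mul_comp_sub_le_indicator hf hf0 hg hg0 x))

theorem convolution_le_mul (hf : Monotone f) (hf0 : ∀ x < 0, f x = 0)
    (hg : Monotone g) (hg0 : ∀ x < 0, g x = 0) {x : ℝ} (hx : 0 ≤ x) :
    (f ⋆ g) x ≤ x * (f x * g x) := by
  calc (f ⋆ g) x ≤ ∫ t, (Icc 0 x).indicator (fun _ => f x * g x) t := by
        simp only [convolution_lsmul, smul_eq_mul]
        exact integral_mono (integrable_mul_comp_sub hf hf0 hg hg0 x)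
          ((integrableOn_const measure_Icc_lt_top.ne).integrable_indicator measurableSet_Icc)
          fun t => (le_abs_self _).trans (abs_mul_comp_sub_le_indicator hf hf0 hg hg0 x t)
    _ = x * (f x * g x) := by
        rw [integral_indicator_const _ measurableSet_Icc, volume_real_Icc_of_le hx, sub_zero,
          smul_eq_mul]

theorem convolution_nonneg (hf : Monotone f) (hf0 : ∀ x < 0, f x = 0)
    (hg : Monotone g) (hg0 : ∀ x < 0, g x = 0) (x : ℝ) : 0 ≤ (f ⋆ g) x := by
  simp only [convolution_lsmul, smul_eq_mul]
  exact integral_nonneg fun t => mul_nonneg (hf.nonneg_of_eq_zero_of_neg hf0 t)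
    (hg.nonneg_of_eq_zero_of_neg hg0 _)

theorem monotone_convolution (hf : Monotone f) (hf0 : ∀ x < 0, f x = 0)
    (hg : Monotone g) (hg0 : ∀ x < 0, g x = 0) : Monotone (f ⋆ g) := by
  intro x y hxy
  simp only [convolution_lsmul, smul_eq_mul]
  exact integral_mono (integrable_mul_comp_sub hf hf0 hg hg0 x)
    (integrable_mul_comp_sub hf hf0 hg hg0 y)
    fun t => mul_le_mul_of_nonneg_left (hg (by linarith)) (hf.nonneg_of_eq_zero_of_neg hf0 t)

theorem continuousWithinAt_convolution_zero (hf : Monotone f) (hf0 : ∀ x < 0, f x = 0)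
    (hg : Monotone g) (hg0 : ∀ x < 0, g x = 0) : ContinuousWithinAt (f ⋆ g) (Ioi 0) 0 := by
  have h0 : (f ⋆ g) 0 = 0 := le_antisymm (by simpa using convolution_le_mul hf hf0 hg hg0 le_rfl)
    (convolution_nonneg hf hf0 hg hg0 0)
  rw [ContinuousWithinAt, h0]
  have hlin : Tendsto (fun x : ℝ => x * (f 1 * g 1)) (𝓝[>] 0) (𝓝 0) := by
    simpa using ((tendsto_id (x := 𝓝 (0 : ℝ))).mul_const (f 1 * g 1)).mono_left
      nhdsWithin_le_nhds
  refine squeeze_zero' (Eventually.of_forall (convolution_nonneg hf hf0 hg hg0)) ?_ hlin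
  filter_upwards [Ioo_mem_nhdsGT zero_lt_one] with x hx
  exact (convolution_le_mul hf hf0 hg hg0 hx.1.le).trans (mul_le_mul_of_nonneg_left
    (mul_le_mul (hf hx.2.le) (hg hx.2.le) (hg.nonneg_of_eq_zero_of_neg hg0 x)
      (hf.nonneg_of_eq_zero_of_neg hf0 1)) hx.1.le)

end Convolution

theorem resolvent_identity {p q c : ℝ} {ψ V W : ℝ → ℝ} (hq : 0 ≤ q)
    (hψ : ∀ l, c < l → p + q < ψ l)
    (hV : Monotone V) (hV0 : ∀ x < 0, V x = 0) (hVc : ContinuousOn V (Ici 0))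
    (hW : Monotone W) (hW0 : ∀ x < 0, W x = 0) (hWc : ContinuousOn W (Ici 0))
    (hVi : ∀ l, c < l → IntegrableOn (fun x => exp (-(l * x)) * V x) (Ioi 0))
    (hVl : ∀ l, c < l → ∫ x in Ioi 0, exp (-(l * x)) * V x = 1 / (ψ l - p))
    (hWi : ∀ l, c < l → IntegrableOn (fun x => exp (-(l * x)) * W x) (Ioi 0))
    (hWl : ∀ l, c < l → ∫ x in Ioi 0, exp (-(l * x)) * W x = 1 / (ψ l - (p + q))) (x : ℝ) :
    W x = V x + q * (W ⋆ V) x := by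
  have hconv := fun l hl => integral_exp_mul_convolution hW0 hV0 (hWi l hl) (hVi l hl)
  have hsum_int : ∀ l, c < l →
      IntegrableOn (fun x => exp (-(l * x)) * (V x + q * (W ⋆ V) x)) (Ioi 0) := fun l hl => by
    refine ((hVi l hl).add ((hconv l hl).1.const_mul q)).congr
      (Eventually.of_forall fun x => ?_)
    simp only [Pi.add_apply]
    ring
  have hlaplace : ∀ l, c < l → ∫ x in Ioi 0, exp (-(l * x)) * W x =
      ∫ x in Ioi 0, exp (-(l * x)) * (V x + q * (W ⋆ V) x) := fun l hl => by
    simp only [mul_add, mul_left_comm _ q]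
    rw [integral_add (hVi l hl) ((hconv l hl).1.const_mul q), integral_const_mul,
      (hconv l hl).2, hWl l hl, hVl l hl]
    have hp : ψ l - p ≠ 0 := by linarith [hψ l hl]
    have hpq : ψ l - (p + q) ≠ 0 := by linarith [hψ l hl]
    field_simp
    ring
  have hae := ae_eq_of_integral_exp_mul_eq (hW.nonneg_of_eq_zero_of_neg hW0)
    (fun x => add_nonneg (hV.nonneg_of_eq_zero_of_neg hV0 x)
      (mul_nonneg hq (convolution_nonneg hW hW0 hV hV0 x))) hWi hsum_int hlaplace
  have hIci : EqOn (fun x => W x - V x) (fun x => q * (W ⋆ V) x) (Ici 0) :=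
    eqOn_Ici_of_ae_eq_of_monotone (hWc.sub hVc)
      ((monotone_convolution hW hW0 hV hV0).const_mul hq)
      ((continuousWithinAt_convolution_zero hW hW0 hV hV0).const_mul q)
      (hae.mono fun x hx => by simp only [hx]; ring)
  rcases lt_or_ge x 0 with hx | hx
  · rw [hW0 x hx, hV0 x hx, convolution_eq_zero_of_neg hW0 hV0 hx, mul_zero, add_zero]
  · linarith [hIci hx]

theorem W_script_symmetry_general
    (p q φ' : ℝ) (hq : 0 ≤ q)
    (ψ Wp Wpq : ℝ → ℝ)
    (hψ : ∀ l, φ' < l → p + q < ψ l)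
    (hWp_cont : ContinuousOn Wp (Set.Ici 0))
    (hWp_nonneg : ∀ x, 0 ≤ x → 0 ≤ Wp x)
    (hWp_mono : MonotoneOn Wp (Set.Ici 0))
    (hWp_neg : ∀ x, x < 0 → Wp x = 0)
    (hWpq_cont : ContinuousOn Wpq (Set.Ici 0))
    (hWpq_nonneg : ∀ x, 0 ≤ x → 0 ≤ Wpq x)
    (hWpq_mono : MonotoneOn Wpq (Set.Ici 0))
    (hWpq_neg : ∀ x, x < 0 → Wpq x = 0)
    (hWp_int : ∀ l, φ' < l →
      MeasureTheory.IntegrableOn (fun x => Real.exp (-(l * x)) * Wp x) (Set.Ioi 0))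
    (hWp_lap : ∀ l, φ' < l →
      ∫ x in Set.Ioi (0:ℝ), Real.exp (-(l * x)) * Wp x = 1 / (ψ l - p))
    (hWpq_int : ∀ l, φ' < l →
      MeasureTheory.IntegrableOn (fun x => Real.exp (-(l * x)) * Wpq x) (Set.Ioi 0))
    (hWpq_lap : ∀ l, φ' < l →
      ∫ x in Set.Ioi (0:ℝ), Real.exp (-(l * x)) * Wpq x = 1 / (ψ l - (p + q))) :
    ∀ s u : ℝ,
      Wpq u - q * ∫ z in (0:ℝ)..s, Wpq (u - z) * Wp z
        = Wp u + q * ∫ z in (0:ℝ)..(u - s), Wp (u - z) * Wpq z := by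
  intro s u
  have hWp := monotone_of_monotoneOn_Ici hWp_mono hWp_nonneg hWp_neg
  have hWpq := monotone_of_monotoneOn_Ici hWpq_mono hWpq_nonneg hWpq_neg
  have hres := resolvent_identity hq hψ hWp hWp_neg hWp_cont hWpq hWpq_neg hWpq_cont
    hWp_int hWp_lap hWpq_int hWpq_lap u
  rw [convolution_eq_intervalIntegral hWpq_neg hWp_neg] at hres
  have hint : ∀ a b, IntervalIntegrable (fun z => Wpq z * Wp (u - z)) volume a b :=
    fun a b => (integrable_mul_comp_sub hWpq hWpq_neg hWp hWp_neg u).intervalIntegrable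
  have hsplit :=
    intervalIntegral.integral_add_adjacent_intervals (hint 0 (u - s)) (hint (u - s) u)
  have hreflect :
      ∫ z in (0:ℝ)..s, Wpq (u - z) * Wp z = ∫ z in (u - s)..u, Wpq z * Wp (u - z) := by
    simpa using intervalIntegral.integral_comp_sub_left (a := 0) (b := s)
      (fun z => Wpq z * Wp (u - z)) u
  simp only [mul_comm (Wp (u - _))]
  linear_combination hres - q * hreflect - q * hsplit

/-- The symmetry relation 𝓦_{x−a}^{(p,q)}(x−y) = 𝓦_{a−y}^{(p+q,−q)}(x−y)
used at the end of the proof of the main theorem: with u = x−y, s = x−a. -/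
theorem W_script_symmetry
    (p q φ φ' : ℝ) (hp : 0 ≤ p) (hq : 0 ≤ q) (hφφ' : φ ≤ φ')
    (ψ Wp Wpq : ℝ → ℝ)
    (hψ : ∀ l, φ' < l → p + q < ψ l)
    (hWp_cont : ContinuousOn Wp (Set.Ici 0))
    (hWp_nonneg : ∀ x, 0 ≤ x → 0 ≤ Wp x)
    (hWp_mono : MonotoneOn Wp (Set.Ici 0))
    (hWp_neg : ∀ x, x < 0 → Wp x = 0)
    (hWpq_cont : ContinuousOn Wpq (Set.Ici 0))
    (hWpq_nonneg : ∀ x, 0 ≤ x → 0 ≤ Wpq x)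
    (hWpq_mono : MonotoneOn Wpq (Set.Ici 0))
    (hWpq_neg : ∀ x, x < 0 → Wpq x = 0)
    (hWp_int : ∀ l, φ' < l →
      MeasureTheory.IntegrableOn (fun x => Real.exp (-(l * x)) * Wp x) (Set.Ioi 0))
    (hWp_lap : ∀ l, φ' < l →
      ∫ x in Set.Ioi (0:ℝ), Real.exp (-(l * x)) * Wp x = 1 / (ψ l - p))
    (hWpq_int : ∀ l, φ' < l →
      MeasureTheory.IntegrableOn (fun x => Real.exp (-(l * x)) * Wpq x) (Set.Ioi 0))
    (hWpq_lap : ∀ l, φ' < l →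
      ∫ x in Set.Ioi (0:ℝ), Real.exp (-(l * x)) * Wpq x = 1 / (ψ l - (p + q))) :
    ∀ s u : ℝ,
      Wpq u - q * ∫ z in (0:ℝ)..s, Wpq (u - z) * Wp z
        = Wp u + q * ∫ z in (0:ℝ)..(u - s), Wp (u - z) * Wpq z :=
  W_script_symmetry_general p q φ' hq ψ Wp Wpq hψ hWp_cont hWp_nonneg hWp_mono hWp_neg hWpq_cont
    hWpq_nonneg hWpq_mono hWpq_neg hWp_int hWp_lap hWpq_int hWpq_lap
end

section
/- Let q > 0 and let θ₁, …, θ_{n+2} be pairwise distinct real numbers, none equal to any −αⱼ, such that ψ(θᵢ) = q and ψ′(θᵢ) ≠ 0 for every i. Then θᵢ ≠ 0 for every i and q ∑_{i=1}^{n+2} 1/(θᵢ ψ′(θᵢ)) = 1. (This is the identity obtained in the paper by taking λ = 0 in the partial fraction decomposition of 1/(ψ − q).) -/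
/-!
Clearing denominators, `P = (ψ - q) · Q` with `Q = ∏ⱼ (λ + αⱼ)` is a polynomial of degree at most
`n + 2` vanishing at the `n + 2` distinct `θᵢ`, so these are its simple roots and
`ψ'(θᵢ) = P'(θᵢ) / Q(θᵢ)`. Since `deg Q = n < n + 2`, the partial fraction expansion
`Q(λ) / P(λ) = ∑ᵢ Q(θᵢ) / ((λ - θᵢ) P'(θᵢ))` holds, and at `λ = 0`, where `ψ(0) = 0` gives
`P(0) = -q Q(0)`, it reads `-1/q = -∑ᵢ 1 / (θᵢ ψ'(θᵢ))`.
-/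

open Polynomial Finset

theorem Polynomial.hasDerivAt_of_mul_eval_eq {𝕜 : Type*} [NontriviallyNormedField 𝕜]
    {g : 𝕜 → 𝕜} {P Q : 𝕜[X]} {x : 𝕜} (hgPQ : ∀ y, Q.eval y ≠ 0 → g y * Q.eval y = P.eval y)
    (hQx : Q.eval x ≠ 0) (hPx : P.eval x = 0) :
    HasDerivAt g (P.derivative.eval x / Q.eval x) x := by
  have hg : (fun y => P.eval y / Q.eval y) =ᶠ[nhds x] g := by
    filter_upwards [Q.continuous.continuousAt.eventually_ne hQx] with y hy
    rw [← hgPQ y hy, mul_div_cancel_right₀ _ hy]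
  have hPQ := (P.hasDerivAt x).div (Q.hasDerivAt x) hQx
  rw [hPx, zero_mul, sub_zero, sq, ← div_div, mul_div_cancel_right₀ _ hQx] at hPQ
  exact hPQ.congr_of_eventuallyEq hg.symm

namespace Lagrange

variable {F ι : Type*} [Field F] {s : Finset ι} {v : ι → F}

theorem eq_C_coeff_mul_nodal {P : F[X]} (hvs : Set.InjOn v s) (hP : P.natDegree ≤ #s)
    (hroots : ∀ i ∈ s, P.eval (v i) = 0) : P = C (P.coeff #s) * nodal s v := by
  refine eq_of_degree_sub_lt_of_eval_index_eq s hvs ?_ fun i hi => ?_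
  · rw [degree_lt_iff_coeff_zero]
    intro m hm
    rcases hm.lt_or_eq with hm | rfl
    · have hNm : (nodal s v).natDegree < m := by rwa [natDegree_nodal]
      rw [coeff_sub, coeff_C_mul, coeff_eq_zero_of_natDegree_lt (hP.trans_lt hm),
        coeff_eq_zero_of_natDegree_lt hNm, mul_zero, sub_zero]
    · rw [coeff_sub, coeff_C_mul, ← natDegree_nodal (v := v), nodal_monic.coeff_natDegree,
        mul_one, natDegree_nodal, sub_self]
  · rw [eval_mul, eval_nodal_at_node hi, mul_zero, hroots i hi]

theorem eval_div_eq_sum_div_derivative {f P : F[X]} {x : F} (hvs : Set.InjOn v s)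
    (hf : f.degree < #s) (hP : P.natDegree ≤ #s) (hroots : ∀ i ∈ s, P.eval (v i) = 0)
    (hx : P.eval x ≠ 0) :
    f.eval x / P.eval x = ∑ i ∈ s, f.eval (v i) / ((x - v i) * P.derivative.eval (v i)) := by
  classical
  have hPN := eq_C_coeff_mul_nodal hvs hP hroots
  set a := P.coeff #s
  have hxv : ∀ i ∈ s, x ≠ v i := fun i hi h => hx (h ▸ hroots i hi)
  have ha : a ≠ 0 := by rintro h; simp [hPN, h] at hx
  have hN : (nodal s v).eval x ≠ 0 := eval_nodal_not_at_node hxv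
  conv_lhs => rw [eq_interpolate hvs hf, eval_interpolate_not_at_node _ hxv]
  rw [hPN, eval_mul, eval_C, mul_comm a, mul_div_mul_left _ _ hN, sum_div]
  refine sum_congr rfl fun i hi => ?_
  have hw := nodalWeight_ne_zero hvs hi
  have hxi := sub_ne_zero.mpr (hxv i hi)
  rw [derivative_C_mul, eval_mul, eval_C, ← inv_inv (eval (v i) (derivative (nodal s v))),
    ← nodalWeight_eq_eval_derivative_nodal hi]
  field_simp

end Lagrange

noncomputable section

namespace HyperExp

open Lagrange

variable {ι : Type*} [Fintype ι] (α w : ι → ℝ) (η c σ q : ℝ)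

def laplaceExponent (l : ℝ) : ℝ :=
  c * l + σ ^ 2 / 2 * l ^ 2 + η * ((∑ i, w i * α i / (l + α i)) - 1)

/-- `∏ⱼ (X + αⱼ)`, the common denominator of the Laplace exponent. -/
def laplaceDenominator : ℝ[X] := nodal univ (-α)

def laplaceNumerator [DecidableEq ι] : ℝ[X] :=
  (C c * X + C (σ ^ 2 / 2) * X ^ 2 - C (η + q)) * laplaceDenominator α +
    C η * ∑ i, C (w i * α i) * nodal (univ.erase i) (-α)

variable {α w}

theorem laplaceExponent_zero (hα : ∀ i, α i ≠ 0) (hw : ∑ i, w i = 1) :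
    laplaceExponent α w η c σ 0 = 0 := by
  simp [laplaceExponent, mul_div_assoc, div_self (hα _), hw]

theorem eval_laplaceDenominator_ne_zero_iff {x : ℝ} :
    (laplaceDenominator α).eval x ≠ 0 ↔ ∀ j, x ≠ -α j := by
  simp [laplaceDenominator, eval_nodal, prod_ne_zero_iff, add_eq_zero_iff_eq_neg]

theorem degree_laplaceDenominator : (laplaceDenominator α).degree = Fintype.card ι :=
  degree_nodal

theorem natDegree_laplaceNumerator_le [DecidableEq ι] :
    (laplaceNumerator α w η c σ q).natDegree ≤ Fintype.card ι + 2 := by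
  have hA : (C c * X + C (σ ^ 2 / 2) * X ^ 2 - C (η + q)).natDegree ≤ 2 := by
    compute_degree
  have hS : (∑ i, C (w i * α i) * nodal (univ.erase i) (-α)).natDegree ≤ Fintype.card ι := by
    refine natDegree_sum_le_of_forall_le _ _ fun i _ => (natDegree_C_mul_le _ _).trans ?_
    rw [natDegree_nodal, ← card_univ]
    exact card_erase_le
  refine (natDegree_add_le _ _).trans (max_le ?_ ((natDegree_C_mul_le _ _).trans (by omega)))
  refine natDegree_mul_le.trans ?_
  rw [laplaceDenominator, natDegree_nodal, card_univ]
  omega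

theorem eval_laplaceNumerator [DecidableEq ι] {x : ℝ} (hx : ∀ j, x ≠ -α j) :
    (laplaceNumerator α w η c σ q).eval x =
      (laplaceExponent α w η c σ x - q) * (laplaceDenominator α).eval x := by
  have hsum : (∑ i, w i * α i / (x + α i)) * (laplaceDenominator α).eval x =
      ∑ i, w i * α i * (nodal (univ.erase i) (-α)).eval x := by
    rw [sum_mul]
    refine sum_congr rfl fun i _ => ?_
    have hxi : x + α i ≠ 0 := fun h => hx i (eq_neg_of_add_eq_zero_left h)
    rw [laplaceDenominator, nodal_eq_mul_nodal_erase (mem_univ i), eval_mul]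
    simp only [eval_sub, eval_X, eval_C, Pi.neg_apply, sub_neg_eq_add]
    field_simp
  simp only [laplaceNumerator, laplaceExponent, eval_add, eval_mul, eval_sub, eval_C, eval_X,
    eval_pow, eval_finsetSum]
  linear_combination η * hsum.symm

theorem hasDerivAt_laplaceExponent [DecidableEq ι] {x : ℝ} (hx : ∀ j, x ≠ -α j)
    (hxq : laplaceExponent α w η c σ x = q) :
    HasDerivAt (laplaceExponent α w η c σ)
      ((laplaceNumerator α w η c σ q).derivative.eval x / (laplaceDenominator α).eval x) x := by
  have hPQ (y : ℝ) (hy : (laplaceDenominator α).eval y ≠ 0) :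
      (laplaceExponent α w η c σ y - q) * (laplaceDenominator α).eval y =
        (laplaceNumerator α w η c σ q).eval y :=
    (eval_laplaceNumerator η c σ q (eval_laplaceDenominator_ne_zero_iff.mp hy)).symm
  have hQx := eval_laplaceDenominator_ne_zero_iff.mpr hx
  have hPx : (laplaceNumerator α w η c σ q).eval x = 0 := by
    rw [eval_laplaceNumerator η c σ q hx, hxq, sub_self, zero_mul]
  simpa using (hasDerivAt_of_mul_eval_eq hPQ hQx hPx).add_const q

end HyperExp

end

open HyperExp

theorem hyperexp_sum_identity_general
    (n : ℕ)
    (α w : Fin n → ℝ)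
    (hα_pos : ∀ i, 0 < α i)
    (hw_sum : ∑ i, w i = 1)
    (η : ℝ) (c σ : ℝ)
    (ψ : ℝ → ℝ)
    (hψ : ∀ l : ℝ, ψ l
      = c * l + σ ^ 2 / 2 * l ^ 2 + η * ((∑ i, w i * α i / (l + α i)) - 1))
    (q : ℝ) (hq : 0 < q)
    (θ : Fin (n + 2) → ℝ) (hθ_inj : Function.Injective θ)
    (hθ_pole : ∀ i j, θ i ≠ -α j)
    (hθ_root : ∀ i, ψ (θ i) = q) :
    (∀ i, θ i ≠ 0) ∧ q * ∑ i, 1 / (θ i * deriv ψ (θ i)) = 1 := by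
  obtain rfl : ψ = laplaceExponent α w η c σ := funext hψ
  set Q := laplaceDenominator α
  set P := laplaceNumerator α w η c σ q
  have h0_pole : ∀ j, (0 : ℝ) ≠ -α j := fun j => (neg_lt_zero.mpr (hα_pos j)).ne'
  have hψ0 := laplaceExponent_zero η c σ (fun j => (hα_pos j).ne') hw_sum
  have hθ0 (i) : θ i ≠ 0 := fun h => hq.ne' (by rw [← hθ_root i, h, hψ0])
  refine ⟨hθ0, ?_⟩
  have hP0 : P.eval 0 = -q * Q.eval 0 := by
    rw [eval_laplaceNumerator η c σ q h0_pole, hψ0, zero_sub]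
  have hQ0 : Q.eval 0 ≠ 0 := eval_laplaceDenominator_ne_zero_iff.mpr h0_pole
  have hpf := Lagrange.eval_div_eq_sum_div_derivative (s := univ) (f := Q) (P := P) (x := 0)
    hθ_inj.injOn
    (by rw [degree_laplaceDenominator, card_univ, Fintype.card_fin, Fintype.card_fin]
        exact_mod_cast (by omega : n < n + 2))
    (by simpa using natDegree_laplaceNumerator_le (α := α) (w := w) η c σ q)
    (fun i _ => by rw [eval_laplaceNumerator η c σ q (hθ_pole i), hθ_root i, sub_self, zero_mul])
    (by rw [hP0]; exact mul_ne_zero (neg_ne_zero.mpr hq.ne') hQ0)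
  have hterm (i) : 1 / (θ i * deriv (laplaceExponent α w η c σ) (θ i)) =
      -(Q.eval (θ i) / ((0 - θ i) * P.derivative.eval (θ i))) := by
    rw [(hasDerivAt_laplaceExponent η c σ q (hθ_pole i) (hθ_root i)).deriv, mul_div_assoc',
      one_div_div, zero_sub, neg_mul, div_neg, neg_neg]
  rw [sum_congr rfl fun i _ => hterm i, sum_neg_distrib, ← hpf, hP0]
  field_simp

/-- Taking λ = 0 in the partial fraction decomposition of 1/(ψ − q) gives
q ∑ᵢ 1/(θᵢ ψ′(θᵢ)) = 1. -/
theorem hyperexp_sum_identity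
    (n : ℕ) (hn : 1 ≤ n)
    (α w : Fin n → ℝ)
    (hα_pos : ∀ i, 0 < α i) (hα_mono : StrictMono α)
    (hw_pos : ∀ i, 0 < w i) (hw_sum : ∑ i, w i = 1)
    (η : ℝ) (hη : 0 < η) (c σ : ℝ) (hσ : 0 < σ)
    (ψ : ℝ → ℝ)
    (hψ : ∀ l : ℝ, ψ l
      = c * l + σ ^ 2 / 2 * l ^ 2 + η * ((∑ i, w i * α i / (l + α i)) - 1))
    (q : ℝ) (hq : 0 < q)
    (θ : Fin (n + 2) → ℝ) (hθ_inj : Function.Injective θ)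
    (hθ_pole : ∀ i j, θ i ≠ -α j)
    (hθ_root : ∀ i, ψ (θ i) = q)
    (hθ_simple : ∀ i, deriv ψ (θ i) ≠ 0) :
    (∀ i, θ i ≠ 0) ∧ q * ∑ i, 1 / (θ i * deriv ψ (θ i)) = 1 :=
  hyperexp_sum_identity_general n α w hα_pos hw_sum η c σ ψ hψ q hq θ hθ_inj hθ_pole hθ_root
end
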